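/- arXiv:1905.05936 — 6 statements merged into one kernel-verified Lean document; each statement's English description precedes it below -/
import Mathlib

section
/- Let A be a bounded right-linear operator on a right quaternionic Hilbert space V, and let Y, Z be A-invariant closed right-linear subspaces with V = Y + Z. Then the S-spectrum of the induced quotient operator satisfies σ_S(A/Z) = σ_S((A|Y)/(Y∩Z)), where A/Z is the operator induced on V/Z and (A|Y)/(Y∩Z) is induced on Y/(Y∩Z). -/
open Filter Topology Set
open scoped Quaternion

noncomputable section

/-- The pseudo-resolvent operator `R_q(A) = A² - 2 Re(q) A + |q|² I`. -/
def Rq {V : Type*} [SeminormedAddCommGroup V] [NormedSpace ℝ V]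
    (A : V →L[ℝ] V) (q : ℍ[ℝ]) : V →L[ℝ] V :=
  A.comp A - (2 * q.re) • A + (‖q‖ ^ 2 : ℝ) • ContinuousLinearMap.id ℝ V

/-- Data of a right quaternionic scalar multiplication on a real normed space,
turning it into a right quaternionic Banach/Hilbert space. `rmul q v` is `v · q`. -/
structure RightAction (V : Type*) [SeminormedAddCommGroup V] [NormedSpace ℝ V] where
  rmul : ℍ[ℝ] → V →L[ℝ] V
  rmul_one : rmul 1 = ContinuousLinearMap.id ℝ V
  rmul_mul : ∀ p q : ℍ[ℝ], rmul (p * q) = (rmul q).comp (rmul p)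
  rmul_add : ∀ p q : ℍ[ℝ], rmul (p + q) = rmul p + rmul q
  rmul_real : ∀ r : ℝ, rmul ((r : ℝ) : ℍ[ℝ]) = r • ContinuousLinearMap.id ℝ V

/-- An operator is right `ℍ`-linear if it commutes with the right scalar action. -/
def RightLinear {V : Type*} [SeminormedAddCommGroup V] [NormedSpace ℝ V]
    (ρ : RightAction V) (A : V →L[ℝ] V) : Prop :=
  ∀ q : ℍ[ℝ], A.comp (ρ.rmul q) = (ρ.rmul q).comp A

/-- Right slice-regularity of `f : ℍ → V` on `U`. -/
def SliceRegularOn {V : Type*} [NormedAddCommGroup V] [NormedSpace ℝ V]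
    (ρ : RightAction V) (f : ℍ[ℝ] → V) (U : Set ℍ[ℝ]) : Prop :=
  ∀ I : ℍ[ℝ], I ^ 2 = -1 → ∀ x y : ℝ, ((x : ℍ[ℝ]) + y • I) ∈ U →
    ∃ fx fy : V,
      HasDerivAt (fun t : ℝ => f ((t : ℍ[ℝ]) + y • I)) fx x ∧
      HasDerivAt (fun t : ℝ => f ((x : ℍ[ℝ]) + t • I)) fy y ∧
      fx + ρ.rmul I fy = 0

/-- The S-spectrum of a bounded operator. -/
def SSpectrum {V : Type*} [SeminormedAddCommGroup V] [NormedSpace ℝ V]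
    (A : V →L[ℝ] V) : Set ℍ[ℝ] :=
  {q | ¬ IsUnit (Rq A q)}

/-- The approximate S-point spectrum. -/
def ApproxSSpectrum {V : Type*} [SeminormedAddCommGroup V] [NormedSpace ℝ V]
    (A : V →L[ℝ] V) : Set ℍ[ℝ] :=
  {q | ∃ φ : ℕ → V, (∀ n, ‖φ n‖ = 1) ∧
    Tendsto (fun n => ‖Rq A q (φ n)‖) atTop (nhds 0)}

/-- The local S-resolvent set of `A` at `φ`. -/
def localResolventSet {V : Type*} [NormedAddCommGroup V] [NormedSpace ℝ V]
    (ρ : RightAction V) (A : V →L[ℝ] V) (φ : V) : Set ℍ[ℝ] :=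
  ⋃₀ {U : Set ℍ[ℝ] | IsOpen U ∧ ∃ f : ℍ[ℝ] → V, ContinuousOn f U ∧
      SliceRegularOn ρ f U ∧ ∀ q ∈ U, Rq A q (f q) = φ}

/-- The local S-spectrum of `A` at `φ`. -/
def localSpectrum {V : Type*} [NormedAddCommGroup V] [NormedSpace ℝ V]
    (ρ : RightAction V) (A : V →L[ℝ] V) (φ : V) : Set ℍ[ℝ] :=
  (localResolventSet ρ A φ)ᶜ

/-- The single-valued extension property. -/
def HasSVEP {V : Type*} [NormedAddCommGroup V] [NormedSpace ℝ V]
    (ρ : RightAction V) (A : V →L[ℝ] V) : Prop :=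
  ∀ U : Set ℍ[ℝ], IsOpen U → ∀ f : ℍ[ℝ] → V, ContinuousOn f U → SliceRegularOn ρ f U →
    (∀ q ∈ U, Rq A q (f q) = 0) → ∀ q ∈ U, f q = 0
/-- Restriction of a bounded operator to an invariant subspace. -/
def restrictOp {V : Type*} [SeminormedAddCommGroup V] [NormedSpace ℝ V] (A : V →L[ℝ] V) (Y : Submodule ℝ V) (hY : ∀ v ∈ Y, A v ∈ Y) :
    Y →L[ℝ] Y where
  toLinearMap := A.toLinearMap.restrict hY
  cont := Continuous.subtype_mk (A.continuous.comp continuous_subtype_val) _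

/-- The operator induced on the quotient by an invariant subspace. -/
def quotOp {V : Type*} [SeminormedAddCommGroup V] [NormedSpace ℝ V] (A : V →L[ℝ] V) (Z : Submodule ℝ V) (hZ : ∀ v ∈ Z, A v ∈ Z) :
    (V ⧸ Z) →L[ℝ] (V ⧸ Z) where
  toLinearMap := Z.mapQ Z A.toLinearMap (fun v hv => hZ v hv)
  cont := by
    show Continuous ⇑(Z.mapQ Z A.toLinearMap fun v hv => hZ v hv)
    refine (Z.isOpenQuotientMap_mkQ.isQuotientMap.continuous_iff).mpr ?_
    have h : (⇑(Z.mapQ Z A.toLinearMap fun v hv => hZ v hv)) ∘ ⇑Z.mkQ = ⇑Z.mkQ ∘ ⇑A := by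
      funext v
      simp [Submodule.mapQ_apply]
    rw [h]
    exact Z.isOpenQuotientMap_mkQ.continuous.comp A.continuous
/-! Because `V = Y + Z`, the inclusion `Y → V` induces a continuous linear bijection
`Y/(Y ∩ Z) → V/Z`; both quotients are Banach spaces, so by the open mapping theorem it is an
isomorphism, and it intertwines `(A|Y)/(Y ∩ Z)` with `A/Z`. Since `R_q(B)` is a polynomial in `B`,
conjugating `B` conjugates `R_q(B)`, which preserves invertibility. -/

theorem map_Rq {E F : Type*} [SeminormedAddCommGroup E] [NormedSpace ℝ E]
    [SeminormedAddCommGroup F] [NormedSpace ℝ F] {H : Type*} [FunLike H (E →L[ℝ] E) (F →L[ℝ] F)]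
    [AlgHomClass H ℝ (E →L[ℝ] E) (F →L[ℝ] F)] (f : H) (A : E →L[ℝ] E) (q : ℍ[ℝ]) :
    f (Rq A q) = Rq (f A) q := by
  simp only [Rq, ← ContinuousLinearMap.mul_def, ← ContinuousLinearMap.one_def, map_add, map_sub,
    map_mul, map_smul, map_one]

section Conjugation

variable {E F : Type*} [SeminormedAddCommGroup E] [NormedSpace ℝ E]
  [SeminormedAddCommGroup F] [NormedSpace ℝ F]

theorem SSpectrum_conjContinuousAlgEquiv (e : E ≃L[ℝ] F) (A : E →L[ℝ] E) :
    SSpectrum (e.conjContinuousAlgEquiv A) = SSpectrum A := by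
  ext q
  simp only [SSpectrum, Set.mem_ofPred_eq, ← map_Rq, isUnit_map_iff]

theorem SSpectrum_eq_of_comp_eq (e : E ≃L[ℝ] F) {A : F →L[ℝ] F} {B : E →L[ℝ] E}
    (h : A ∘L e = e ∘L B) : SSpectrum A = SSpectrum B := by
  have hA : A = e.conjContinuousAlgEquiv B := by
    rw [ContinuousLinearEquiv.conjContinuousAlgEquiv_apply, ← ContinuousLinearMap.comp_assoc, ← h,
      ContinuousLinearMap.comp_assoc, ContinuousLinearEquiv.coe_comp_coe_symm,
      ContinuousLinearMap.comp_id]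
  rw [hA, SSpectrum_conjContinuousAlgEquiv]

end Conjugation

namespace Submodule

variable {R M : Type*} [Ring R] [AddCommGroup M] [Module R M]

theorem mkQ_comp_subtype_surjective {Y Z : Submodule R M} (h : Y ⊔ Z = ⊤) :
    Function.Surjective (Z.mkQ ∘ₗ Y.subtype) := by
  rintro ⟨v⟩
  obtain ⟨y, hy, z, hz, rfl⟩ := mem_sup.mp (h ▸ mem_top : v ∈ Y ⊔ Z)
  exact ⟨⟨y, hy⟩, (Quotient.eq Z).mpr (by simpa using neg_mem hz)⟩

theorem ker_mkQ_comp_subtype (Y Z : Submodule R M) :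
    LinearMap.ker (Z.mkQ ∘ₗ Y.subtype) = (Y ⊓ Z).comap Y.subtype := by
  ext y
  simp

def quotientInfEquivQuotientOfSupEqTop {Y Z : Submodule R M} (h : Y ⊔ Z = ⊤) :
    (Y ⧸ (Y ⊓ Z).comap Y.subtype) ≃ₗ[R] M ⧸ Z :=
  (quotEquivOfEq _ _ (ker_mkQ_comp_subtype Y Z).symm).trans
    ((Z.mkQ ∘ₗ Y.subtype).quotKerEquivOfSurjective (mkQ_comp_subtype_surjective h))

variable {𝕜 V : Type*} [NontriviallyNormedField 𝕜] [NormedAddCommGroup V] [NormedSpace 𝕜 V]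

theorem isClosed_comap_subtype_inf {Y Z : Submodule 𝕜 V} (hZ : IsClosed (Z : Set V)) :
    IsClosed (((Y ⊓ Z).comap Y.subtype : Submodule 𝕜 Y) : Set Y) := by
  have hpre :
      (((Y ⊓ Z).comap Y.subtype : Submodule 𝕜 Y) : Set Y) = Subtype.val ⁻¹' (Z : Set V) := by
    ext y
    simp
  exact hpre ▸ hZ.preimage continuous_subtype_val

def quotientInfCLEquivQuotientOfSupEqTop [CompleteSpace V]
    {Y Z : Submodule 𝕜 V} (hY : IsClosed (Y : Set V)) (hZ : IsClosed (Z : Set V))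
    (h : Y ⊔ Z = ⊤) : (Y ⧸ (Y ⊓ Z).comap Y.subtype) ≃L[𝕜] V ⧸ Z :=
  haveI : IsClosed (Z : Set V) := hZ
  haveI : IsClosed (((Y ⊓ Z).comap Y.subtype : Submodule 𝕜 Y) : Set Y) :=
    isClosed_comap_subtype_inf hZ
  haveI : CompleteSpace Y := hY.completeSpace_coe
  (quotientInfEquivQuotientOfSupEqTop h).toContinuousLinearEquivOfContinuous <| by
    rw [((Y ⊓ Z).comap Y.subtype).isQuotientMap_mkQ.continuous_iff]
    exact Z.continuous_mkQ.comp continuous_subtype_val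

end Submodule

theorem restrictOp_mem_comap_inf {V : Type*} [NormedAddCommGroup V] [NormedSpace ℝ V]
    (A : V →L[ℝ] V) {Y Z : Submodule ℝ V} (hYA : ∀ v ∈ Y, A v ∈ Y) (hZA : ∀ v ∈ Z, A v ∈ Z) :
    ∀ v ∈ (Y ⊓ Z).comap Y.subtype, restrictOp A Y hYA v ∈ (Y ⊓ Z).comap Y.subtype :=
  fun v hv => ⟨hYA v v.2, hZA v hv.2⟩

theorem quotOp_comp_quotientInfCLEquivQuotientOfSupEqTop {V : Type*} [NormedAddCommGroup V]
    [NormedSpace ℝ V] [CompleteSpace V] (A : V →L[ℝ] V) {Y Z : Submodule ℝ V}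
    (hYA : ∀ v ∈ Y, A v ∈ Y) (hZA : ∀ v ∈ Z, A v ∈ Z)
    (hY : IsClosed (Y : Set V)) (hZ : IsClosed (Z : Set V)) (h : Y ⊔ Z = ⊤) :
    quotOp A Z hZA ∘L
        (Submodule.quotientInfCLEquivQuotientOfSupEqTop hY hZ h : _ →L[ℝ] _) =
      (Submodule.quotientInfCLEquivQuotientOfSupEqTop hY hZ h : _ →L[ℝ] _) ∘L
        quotOp (restrictOp A Y hYA) _ (restrictOp_mem_comap_inf A hYA hZA) := by
  ext ⟨y⟩
  rfl

/-- If `Y, Z` are `A`-invariant closed right-linear subspaces with `V = Y + Z`, then the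
S-spectrum of the quotient operator `A/Z` equals the S-spectrum of `(A|Y)/(Y ∩ Z)`. -/
theorem stmt6 {V : Type*} [NormedAddCommGroup V] [InnerProductSpace ℝ V] [CompleteSpace V]
    (A : V →L[ℝ] V)
    (Y Z : Submodule ℝ V) (hYc : IsClosed (Y : Set V)) (hZc : IsClosed (Z : Set V))
    (hYA : ∀ v ∈ Y, A v ∈ Y) (hZA : ∀ v ∈ Z, A v ∈ Z)
    (hsum : Y ⊔ Z = ⊤) :
    SSpectrum (quotOp A Z hZA) =
      SSpectrum (quotOp (restrictOp A Y hYA) ((Y ⊓ Z).comap Y.subtype)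
        (fun v hv => by
          have h1 : (A (v : V)) ∈ Y ⊓ Z :=
            ⟨hYA (v : V) v.2, hZA (v : V) (Submodule.mem_comap.mp hv).2⟩
          exact Submodule.mem_comap.mpr h1)) :=
  SSpectrum_eq_of_comp_eq _
    (quotOp_comp_quotientInfCLEquivQuotientOfSupEqTop A hYA hZA hYc hZc hsum)

end
end

section
/- Let A be a bounded right-linear operator on a right quaternionic Hilbert space V and Y an A-invariant closed right-linear subspace. If q ∈ ℍ is such that both R_q(A|Y) (on Y) and R_q(A/Y) (on V/Y) are invertible, then R_q(A) is invertible on V. Consequently σ_S(A) ⊆ σ_S(A|Y) ∪ σ_S(A/Y). -/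
/-! `R_q(A)` leaves `Y` invariant and induces `R_q(A|Y)` on `Y` and `R_q(A/Y)` on `V/Y`. The five
lemma for `0 → Y → V → V/Y → 0` makes `R_q(A)` bijective, and on the Banach space `V` the open
mapping theorem turns bijectivity into invertibility. -/

open Filter Topology Set
open scoped Quaternion

noncomputable section

theorem LinearMap.bijective_of_bijective_restrict_of_bijective_mapQ {R M : Type*} [CommRing R]
    [AddCommGroup M] [Module R M] (f : M →ₗ[R] M) (p : Submodule R M) (hp : ∀ v ∈ p, f v ∈ p)
    (hres : Function.Bijective (f.restrict hp)) (hquot : Function.Bijective (p.mapQ p f hp)) :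
    Function.Bijective f := by
  have exact_zero_subtype : Function.Exact (0 : Unit →ₗ[R] p) p.subtype := fun v ↦ by
    simp [eq_comm]
  have exact_mkQ_zero : Function.Exact p.mkQ (0 : M ⧸ p →ₗ[R] Unit) := fun v ↦ by
    simpa using (p.mkQ_surjective v)
  -- the five lemma for `0 → p → M → M ⧸ p → 0`, with `Unit` standing for the zero modules
  exact bijective_of_surjective_of_bijective_of_bijective_of_injective
    0 p.subtype p.mkQ 0 0 p.subtype p.mkQ 0 0 (f.restrict hp) f (p.mapQ p f hp) 0
    (by simp) (by ext; simp) (by ext; simp) (by simp)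
    exact_zero_subtype (LinearMap.exact_subtype_mkQ p) exact_mkQ_zero
    exact_zero_subtype (LinearMap.exact_subtype_mkQ p) exact_mkQ_zero
    (fun _ ↦ ⟨(), rfl⟩) hres hquot (fun _ _ _ ↦ rfl)

theorem ContinuousLinearMap.bijective_of_isUnit {R M : Type*} [Semiring R] [TopologicalSpace M]
    [AddCommMonoid M] [Module R M] [ContinuousAdd M] {f : M →L[R] M} (hf : IsUnit f) :
    Function.Bijective f :=
  (Module.End.isUnit_iff _).mp (hf.map toLinearMapRingHom)

theorem isUnit_of_isUnit_restrictOp_of_isUnit_quotOp {V : Type*} [NormedAddCommGroup V]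
    [NormedSpace ℝ V] [CompleteSpace V] (T : V →L[ℝ] V) (Y : Submodule ℝ V)
    (hY : ∀ v ∈ Y, T v ∈ Y) (hres : IsUnit (restrictOp T Y hY)) (hquot : IsUnit (quotOp T Y hY)) :
    IsUnit T :=
  T.isUnit_iff_bijective.mpr <| LinearMap.bijective_of_bijective_restrict_of_bijective_mapQ
    T.toLinearMap Y hY (ContinuousLinearMap.bijective_of_isUnit hres)
    (ContinuousLinearMap.bijective_of_isUnit hquot)

section Rq

variable {V : Type*} [SeminormedAddCommGroup V] [NormedSpace ℝ V] (A : V →L[ℝ] V)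
  (Y : Submodule ℝ V) (hY : ∀ v ∈ Y, A v ∈ Y) (q : ℍ[ℝ])

include hY in
theorem Rq_apply_mem : ∀ v ∈ Y, Rq A q v ∈ Y := fun v hv ↦ by
  simp only [Rq, add_apply, sub_apply, smul_apply, ContinuousLinearMap.comp_apply,
    ContinuousLinearMap.id_apply]
  exact Y.add_mem (Y.sub_mem (hY _ (hY v hv)) (Y.smul_mem _ (hY v hv))) (Y.smul_mem _ hv)

theorem Rq_restrictOp :
    Rq (restrictOp A Y hY) q = restrictOp (Rq A q) Y (Rq_apply_mem A Y hY q) :=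
  rfl

theorem Rq_quotOp : Rq (quotOp A Y hY) q = quotOp (Rq A q) Y (Rq_apply_mem A Y hY q) := by
  ext x
  obtain ⟨v, rfl⟩ := Y.mkQ_surjective x
  simp [Rq, quotOp]

end Rq

theorem stmt7_general {V : Type*} [NormedAddCommGroup V] [InnerProductSpace ℝ V] [CompleteSpace V]
    (A : V →L[ℝ] V) (Y : Submodule ℝ V) (hYA : ∀ v ∈ Y, A v ∈ Y) :
    (∀ q : ℍ[ℝ], IsUnit (Rq (restrictOp A Y hYA) q) → IsUnit (Rq (quotOp A Y hYA) q) →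
      IsUnit (Rq A q)) ∧
    SSpectrum A ⊆ SSpectrum (restrictOp A Y hYA) ∪ SSpectrum (quotOp A Y hYA) := by
  have key (q : ℍ[ℝ]) (hres : IsUnit (Rq (restrictOp A Y hYA) q))
      (hquot : IsUnit (Rq (quotOp A Y hYA) q)) : IsUnit (Rq A q) := by
    rw [Rq_restrictOp] at hres
    rw [Rq_quotOp] at hquot
    exact isUnit_of_isUnit_restrictOp_of_isUnit_quotOp _ Y _ hres hquot
  refine ⟨key, fun q hq ↦ ?_⟩
  rw [Set.mem_union]
  by_contra! h
  exact hq (key q (not_not.mp h.1) (not_not.mp h.2))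

/-- If for `q : ℍ` both `R_q(A|Y)` and `R_q(A/Y)` are invertible, then `R_q(A)` is
invertible; consequently `σ_S(A) ⊆ σ_S(A|Y) ∪ σ_S(A/Y)`. -/
theorem stmt7 {V : Type*} [NormedAddCommGroup V] [InnerProductSpace ℝ V] [CompleteSpace V]
    (ρ : RightAction V) (A : V →L[ℝ] V) (hA : RightLinear ρ A)
    (Y : Submodule ℝ V) (hYc : IsClosed (Y : Set V))
    (hYr : ∀ (q : ℍ[ℝ]) (v : V), v ∈ Y → ρ.rmul q v ∈ Y)
    (hYA : ∀ v ∈ Y, A v ∈ Y) :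
    (∀ q : ℍ[ℝ], IsUnit (Rq (restrictOp A Y hYA) q) → IsUnit (Rq (quotOp A Y hYA) q) →
      IsUnit (Rq A q)) ∧
    SSpectrum A ⊆ SSpectrum (restrictOp A Y hYA) ∪ SSpectrum (quotOp A Y hYA) :=
  stmt7_general A Y hYA
end
end

section
/- If A is a bounded right-linear operator on a right quaternionic Banach space V which is surjective and has the single-valued extension property (SVEP), then A is invertible. -/
open Filter Topology Set
open scoped Quaternion

noncomputable section

/-! If `A` is surjective but not invertible, the open mapping theorem yields `v ≠ 0` with
`A v = 0` and a backward orbit `φ₀ = v`, `A φₙ₊₁ = φₙ`, `‖φₙ‖ ≤ ‖v‖ Cⁿ`. The right power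
series `f(q) = ∑ φₙ qⁿ` then converges near `0` and satisfies `A f(q) = f(q) q`, so that
`R_q(A) f(q) = f(q) (q² - 2 Re(q) q + |q|²) = 0`, the bracket vanishing for every quaternion.
On each slice `ℝ + ℝI` the variable `q` commutes with `I`, so `f` is slice regular there by
the Cauchy–Riemann computation for ordinary power series. Since `f(0) = v ≠ 0`, this
contradicts SVEP. -/

theorem summable_nat_mul_pow_sub_one {x : ℝ} (hx : |x| < 1) :
    Summable fun n : ℕ => (n : ℝ) * x ^ (n - 1) := by
  rw [← summable_nat_add_iff 1]
  simpa [add_mul] using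
    (summable_pow_mul_geometric_of_norm_lt_one 1 hx).add (summable_geometric_of_abs_lt_one hx)

theorem hasDerivAt_add_smul_pow {𝔸 : Type*} [NormedRing 𝔸] [NormedAlgebra ℝ 𝔸] {a d : 𝔸}
    (had : Commute a d) (n : ℕ) (t : ℝ) :
    HasDerivAt (fun s : ℝ => (a + s • d) ^ n) (n • ((a + t • d) ^ (n - 1) * d)) t := by
  have hline : HasDerivAt (fun s : ℝ => a + s • d) d t := by
    simpa using ((hasDerivAt_id t).smul_const d).const_add a
  convert hline.fun_pow' n using 1
  have hcomm : Commute (a + t • d) d := had.add_left ((Commute.refl d).smul_left t)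
  calc n • ((a + t • d) ^ (n - 1) * d) = ∑ i ∈ Finset.range n, (a + t • d) ^ (n - 1) * d := by
        simp
    _ = _ := Finset.sum_congr rfl fun i hi => by
      rw [mul_assoc, ← (hcomm.pow_left i).eq, ← mul_assoc, ← pow_add, Nat.pred_eq_sub_one,
        Nat.sub_add_cancel (Nat.le_sub_one_of_lt (Finset.mem_range.1 hi))]

section VecPowerSeries

variable {𝔸 V W : Type*} [NormedRing 𝔸] [NormedAlgebra ℝ 𝔸]
  [NormedAddCommGroup V] [NormedSpace ℝ V] [NormedAddCommGroup W] [NormedSpace ℝ W]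

-- With `B = ρ.toCLM` this is the right power series `∑ φₙ qⁿ`.
def vecPowerSeries (B : 𝔸 →L[ℝ] V →L[ℝ] W) (φ : ℕ → V) (q : 𝔸) : W :=
  ∑' n, B (q ^ n) (φ n)

variable (B : 𝔸 →L[ℝ] V →L[ℝ] W) {φ : ℕ → V} {M C r : ℝ}

theorem vecPowerSeries_zero (φ : ℕ → V) : vecPowerSeries B φ 0 = B 1 (φ 0) := by
  rw [vecPowerSeries, tsum_eq_single 0 fun n hn => by simp [zero_pow hn]]
  simp

variable [NormOneClass 𝔸]

theorem norm_apply_pow_apply_le (hφ : ∀ n, ‖φ n‖ ≤ M * C ^ n) {q : 𝔸} (hq : ‖q‖ ≤ r) (n : ℕ) :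
    ‖B (q ^ n) (φ n)‖ ≤ ‖B‖ * M * (r * C) ^ n := by
  have hr : 0 ≤ r := (norm_nonneg q).trans hq
  calc ‖B (q ^ n) (φ n)‖ ≤ ‖B‖ * ‖q ^ n‖ * ‖φ n‖ := B.le_opNorm₂ _ _
    _ ≤ ‖B‖ * r ^ n * (M * C ^ n) := by
        gcongr
        · exact (norm_pow_le q n).trans (pow_le_pow_left₀ (norm_nonneg q) hq n)
        · exact hφ n
    _ = ‖B‖ * M * (r * C) ^ n := by ring

theorem norm_apply_nsmul_pow_mul_apply_le (hφ : ∀ n, ‖φ n‖ ≤ M * C ^ n) {q : 𝔸} (hq : ‖q‖ ≤ r)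
    (d : 𝔸) (n : ℕ) :
    ‖B (n • (q ^ (n - 1) * d)) (φ n)‖ ≤ ‖B‖ * ‖d‖ * M * C * (n * (r * C) ^ (n - 1)) := by
  have hr : 0 ≤ r := (norm_nonneg q).trans hq
  calc ‖B (n • (q ^ (n - 1) * d)) (φ n)‖ ≤ ‖B‖ * ‖n • (q ^ (n - 1) * d)‖ * ‖φ n‖ :=
        B.le_opNorm₂ _ _
    _ ≤ ‖B‖ * (n * (r ^ (n - 1) * ‖d‖)) * (M * C ^ n) := by
        gcongr
        · refine norm_nsmul_le.trans ?_
          gcongr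
          refine (norm_mul_le _ _).trans ?_
          gcongr
          exact (norm_pow_le q _).trans (pow_le_pow_left₀ (norm_nonneg q) hq _)
        · exact hφ n
    _ = ‖B‖ * ‖d‖ * M * C * (n * (r * C) ^ (n - 1)) := by
        cases n with
        | zero => simp
        | succ n => rw [Nat.add_sub_cancel]; ring

variable [CompleteSpace W] (hφ : ∀ n, ‖φ n‖ ≤ M * C ^ n) (hrC : |r * C| < 1)
include hφ hrC

theorem summable_vecPowerSeries {q : 𝔸} (hq : ‖q‖ ≤ r) : Summable fun n => B (q ^ n) (φ n) :=
  .of_norm_bounded ((summable_geometric_of_abs_lt_one hrC).mul_left _)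
    (norm_apply_pow_apply_le B hφ hq)

theorem summable_apply_nsmul_pow_mul_apply {q : 𝔸} (hq : ‖q‖ ≤ r) (d : 𝔸) :
    Summable fun n => B (n • (q ^ (n - 1) * d)) (φ n) :=
  .of_norm_bounded ((summable_nat_mul_pow_sub_one hrC).mul_left _)
    (norm_apply_nsmul_pow_mul_apply_le B hφ hq d)

theorem continuousOn_vecPowerSeries : ContinuousOn (vecPowerSeries B φ) (Metric.ball 0 r) :=
  continuousOn_tsum (fun n => by fun_prop) ((summable_geometric_of_abs_lt_one hrC).mul_left _)
    fun n q hq => norm_apply_pow_apply_le B hφ (mem_ball_zero_iff.1 hq).le n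

theorem hasDerivAt_vecPowerSeries_add_smul {a d : 𝔸} (had : Commute a d) {t : ℝ}
    (ht : a + t • d ∈ Metric.ball 0 r) :
    HasDerivAt (fun s : ℝ => vecPowerSeries B φ (a + s • d))
      (∑' n, B (n • ((a + t • d) ^ (n - 1) * d)) (φ n)) t := by
  set S : Set ℝ := (fun s : ℝ => a + s • d) ⁻¹' Metric.ball 0 r
  have hS : IsOpen S := Metric.isOpen_ball.preimage (by fun_prop)
  have hSconn : IsPreconnected S :=
    (((convex_ball 0 r).translate_preimage_right a).linear_preimage
      (LinearMap.toSpanSingleton ℝ 𝔸 d)).isPreconnected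
  refine hasDerivAt_tsum_of_isPreconnected
    ((summable_nat_mul_pow_sub_one hrC).mul_left (‖B‖ * ‖d‖ * M * C)) hS hSconn
    (fun n s _ => ?_)
    (fun n s hs => norm_apply_nsmul_pow_mul_apply_le B hφ (mem_ball_zero_iff.1 hs).le d n)
    ht (summable_vecPowerSeries B hφ hrC (mem_ball_zero_iff.1 ht).le) ht
  exact (B.flip (φ n)).hasFDerivAt.comp_hasDerivAt s (hasDerivAt_add_smul_pow had n s)

end VecPowerSeries

theorem Quaternion.sq_sub_two_re_smul_add_norm_sq_eq_zero (q : ℍ[ℝ]) :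
    q ^ 2 - (2 * q.re) • q + ((‖q‖ ^ 2 : ℝ) : ℍ[ℝ]) = 0 := by
  have h1 : ((2 * q.re : ℝ) : ℍ[ℝ]) = q + star q := (Quaternion.self_add_star' q).symm
  have h2 : ((‖q‖ ^ 2 : ℝ) : ℍ[ℝ]) = star q * q := by
    rw [Quaternion.star_mul_self, Quaternion.normSq_eq_norm_mul_self, sq]
  rw [← Quaternion.coe_mul_eq_smul, h1, h2, sq, add_mul]
  abel

namespace RightAction

variable {V : Type*} [SeminormedAddCommGroup V] [NormedSpace ℝ V] (ρ : RightAction V)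

theorem rmul_smul (r : ℝ) (q : ℍ[ℝ]) : ρ.rmul (r • q) = r • ρ.rmul q := by
  rw [← Quaternion.coe_mul_eq_smul, ρ.rmul_mul, ρ.rmul_real, ContinuousLinearMap.comp_smul,
    ContinuousLinearMap.comp_id]

def toCLM : ℍ[ℝ] →L[ℝ] V →L[ℝ] V :=
  LinearMap.toContinuousLinearMap
    { toFun := ρ.rmul, map_add' := ρ.rmul_add, map_smul' := ρ.rmul_smul }

@[simp] theorem toCLM_apply (q : ℍ[ℝ]) : ρ.toCLM q = ρ.rmul q := rfl

theorem rmul_mul_apply (p q : ℍ[ℝ]) (v : V) : ρ.rmul (p * q) v = ρ.rmul q (ρ.rmul p v) := by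
  rw [ρ.rmul_mul]; rfl

theorem rmul_rmul_of_sq_eq_neg_one {I : ℍ[ℝ]} (hI : I ^ 2 = -1) (v : V) :
    ρ.rmul I (ρ.rmul I v) = -v := by
  rw [← rmul_mul_apply, ← sq, hI, ← toCLM_apply, map_neg, toCLM_apply, ρ.rmul_one]
  rfl

end RightAction

namespace RightLinear

variable {V : Type*} [SeminormedAddCommGroup V] [NormedSpace ℝ V] {ρ : RightAction V}
  {A : V →L[ℝ] V}

theorem apply_rmul (hA : RightLinear ρ A) (q : ℍ[ℝ]) (v : V) :
    A (ρ.rmul q v) = ρ.rmul q (A v) :=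
  congrArg (· v) (hA q)

theorem rq_apply_eq_zero_of_apply_eq_rmul (hA : RightLinear ρ A) {q : ℍ[ℝ]} {w : V}
    (hw : A w = ρ.rmul q w) : Rq A q w = 0 := by
  have hA2 : A (A w) = ρ.rmul (q ^ 2) w := by
    rw [hw, hA.apply_rmul, hw, sq, ρ.rmul_mul_apply]
  calc Rq A q w = A (A w) - (2 * q.re) • A w + (‖q‖ ^ 2 : ℝ) • w := rfl
    _ = ρ.toCLM (q ^ 2 - (2 * q.re) • q + ((‖q‖ ^ 2 : ℝ) : ℍ[ℝ])) w := by
        rw [hA2, hw, map_add, map_sub, map_smul, add_apply, sub_apply, smul_apply]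
        simp only [ρ.toCLM_apply, ρ.rmul_real]
        rfl
    _ = 0 := by rw [Quaternion.sq_sub_two_re_smul_add_norm_sq_eq_zero, map_zero]; rfl

end RightLinear

section RightPowerSeries

variable {V : Type*} [NormedAddCommGroup V] [NormedSpace ℝ V] {ρ : RightAction V} {φ : ℕ → V}

theorem RightLinear.apply_vecPowerSeries {A : V →L[ℝ] V} (hA : RightLinear ρ A)
    (h0 : A (φ 0) = 0) (hsucc : ∀ n, A (φ (n + 1)) = φ n) {q : ℍ[ℝ]}
    (hq : Summable fun n => ρ.rmul (q ^ n) (φ n)) :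
    A (vecPowerSeries ρ.toCLM φ q) = ρ.rmul q (vecPowerSeries ρ.toCLM φ q) := by
  have hAq : Summable fun n => ρ.rmul (q ^ n) (A (φ n)) := by
    simpa only [hA.apply_rmul] using hq.mapL A
  simp only [vecPowerSeries, ρ.toCLM_apply]
  rw [A.map_tsum hq, (ρ.rmul q).map_tsum hq, tsum_congr fun n => hA.apply_rmul _ _,
    hAq.tsum_eq_zero_add, h0, map_zero, zero_add]
  exact tsum_congr fun n => by rw [hsucc, pow_succ, ρ.rmul_mul_apply]

variable [CompleteSpace V] {M C r : ℝ} (hφ : ∀ n, ‖φ n‖ ≤ M * C ^ n) (hrC : |r * C| < 1)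
include hφ hrC

theorem tsum_toCLM_nsmul_pow_mul_apply {q : ℍ[ℝ]} (hq : ‖q‖ ≤ r) (d : ℍ[ℝ]) :
    ∑' n, ρ.toCLM (n • (q ^ (n - 1) * d)) (φ n) =
      ρ.rmul d (∑' n, ρ.toCLM (n • q ^ (n - 1)) (φ n)) := by
  have hsum : Summable fun n => ρ.toCLM (n • q ^ (n - 1)) (φ n) := by
    simpa only [mul_one] using summable_apply_nsmul_pow_mul_apply _ hφ hrC hq 1
  rw [(ρ.rmul d).map_tsum hsum]
  refine tsum_congr fun n => ?_
  rw [← smul_mul_assoc, ρ.toCLM_apply, ρ.toCLM_apply, ρ.rmul_mul_apply]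

theorem sliceRegularOn_vecPowerSeries :
    SliceRegularOn ρ (vecPowerSeries ρ.toCLM φ) (Metric.ball 0 r) := by
  intro I hI x y hq
  have hcoe : ∀ t : ℝ, y • I + t • (1 : ℍ[ℝ]) = t + y • I := fun t => by
    rw [add_comm, ← Quaternion.coe_mul_eq_smul, mul_one]
  have hx := hasDerivAt_vecPowerSeries_add_smul ρ.toCLM hφ hrC (Commute.one_right (y • I))
    (t := x) (by rwa [hcoe])
  simp only [hcoe] at hx
  refine ⟨_, _, hx,
    hasDerivAt_vecPowerSeries_add_smul ρ.toCLM hφ hrC (Quaternion.coe_commutes x I) hq, ?_⟩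
  have hq' := (mem_ball_zero_iff.1 hq).le
  rw [tsum_toCLM_nsmul_pow_mul_apply hφ hrC hq', tsum_toCLM_nsmul_pow_mul_apply hφ hrC hq',
    ρ.rmul_rmul_of_sq_eq_neg_one hI, ρ.rmul_one, ContinuousLinearMap.id_apply, add_neg_cancel]

end RightPowerSeries

namespace ContinuousLinearMap

variable {𝕜 E : Type*} [NontriviallyNormedField 𝕜] [NormedAddCommGroup E] [NormedSpace 𝕜 E]
  [CompleteSpace E] {A : E →L[𝕜] E}

theorem exists_ne_zero_apply_eq_zero_of_surjective (hsurj : Function.Surjective A)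
    (hA : ¬ IsUnit A) : ∃ v, v ≠ 0 ∧ A v = 0 := by
  have hinj : ¬ Function.Injective A := fun hinj => hA (isUnit_iff_bijective.2 ⟨hinj, hsurj⟩)
  simpa [injective_iff_map_eq_zero, and_comm] using hinj

theorem exists_preimage_chain_norm_le (hsurj : Function.Surjective A) :
    ∃ C > 0, ∀ v : E, ∃ φ : ℕ → E,
      φ 0 = v ∧ (∀ n, A (φ (n + 1)) = φ n) ∧ ∀ n, ‖φ n‖ ≤ ‖v‖ * C ^ n := by
  obtain ⟨C, hC, hpre⟩ := A.exists_preimage_norm_le hsurj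
  choose g hAg hg using hpre
  refine ⟨C, hC, fun v => ⟨fun n => g^[n] v, rfl, fun n => ?_, fun n => ?_⟩⟩
  · dsimp only
    rw [Function.iterate_succ_apply', hAg]
  · induction n with
    | zero => simp
    | succ n ih =>
      dsimp only at ih ⊢
      rw [Function.iterate_succ_apply', pow_succ, ← mul_assoc, mul_comm _ C]
      exact (hg _).trans (mul_le_mul_of_nonneg_left ih hC.le)

end ContinuousLinearMap

/-- A surjective bounded right-linear operator with the single-valued extension property
on a right quaternionic Banach space is invertible. -/
theorem stmt8 {V : Type*} [NormedAddCommGroup V] [NormedSpace ℝ V] [CompleteSpace V]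
    (ρ : RightAction V) (A : V →L[ℝ] V) (hA : RightLinear ρ A)
    (hsurj : Function.Surjective A) (hsvep : HasSVEP ρ A) :
    IsUnit A := by
  by_contra hAu
  obtain ⟨v, hv, hAv⟩ := A.exists_ne_zero_apply_eq_zero_of_surjective hsurj hAu
  obtain ⟨C, hC, hchain⟩ := A.exists_preimage_chain_norm_le hsurj
  obtain ⟨φ, rfl, hsucc, hφ⟩ := hchain v
  set r := (C + 1)⁻¹
  have hr : 0 < r := by positivity
  have hrC : |r * C| < 1 := by
    rw [abs_of_pos (by positivity), inv_mul_lt_iff₀ (by positivity)]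
    linarith
  have hker : ∀ q ∈ Metric.ball 0 r, Rq A q (vecPowerSeries ρ.toCLM φ q) = 0 := fun q hq =>
    hA.rq_apply_eq_zero_of_apply_eq_rmul <| hA.apply_vecPowerSeries hAv hsucc <|
      summable_vecPowerSeries ρ.toCLM hφ hrC (mem_ball_zero_iff.1 hq).le
  have hF0 := hsvep _ Metric.isOpen_ball _ (continuousOn_vecPowerSeries ρ.toCLM hφ hrC)
    (sliceRegularOn_vecPowerSeries hφ hrC) hker 0 (Metric.mem_ball_self hr)
  rw [vecPowerSeries_zero, ρ.toCLM_apply, ρ.rmul_one] at hF0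
  exact hv hF0

end
end

section
/- Let A be a bounded right-linear operator on a right quaternionic Banach space V, φ ∈ V, and U ⊆ ℍ open. Suppose f : U → V is a continuous right slice-regular function with R_p(A)f(p) = φ for all p ∈ U. Then for every q ∈ U, the local S-spectrum satisfies σ_A^S(φ) ⊆ σ_A^S(f(q)). -/
/-!
`R_q(A)` is a polynomial in `A`, so it commutes with every `R_s(A)` and, `A` being right linear,
with the right scalar action. Hence applying `R_q(A)` to a local solution `g` of
`R_s(A) g(s) = f(q)` near a point gives a local solution of `R_s(A) h(s) = R_q(A) f(q) = φ`:
every point of the local resolvent set of `f(q)` lies in that of `φ`.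
-/

open Filter Topology Set
open scoped Quaternion

noncomputable section

section

variable {V : Type*}

theorem Rq_eq_mul [SeminormedAddCommGroup V] [NormedSpace ℝ V] (A : V →L[ℝ] V) (q : ℍ[ℝ]) :
    Rq A q = A * A - (2 * q.re) • A + (‖q‖ ^ 2 : ℝ) • 1 :=
  rfl

theorem Commute.Rq_right [SeminormedAddCommGroup V] [NormedSpace ℝ V] {A B : V →L[ℝ] V}
    (h : Commute A B) (q : ℍ[ℝ]) : Commute B (Rq A q) := by
  rw [Rq_eq_mul]
  exact ((h.symm.mul_right h.symm).sub_right (h.symm.smul_right _)).add_right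
    ((Commute.one_right B).smul_right _)

theorem RightLinear.Rq [SeminormedAddCommGroup V] [NormedSpace ℝ V] {ρ : RightAction V}
    {A : V →L[ℝ] V} (hA : RightLinear ρ A) (q : ℍ[ℝ]) : RightLinear ρ (Rq A q) :=
  fun I => (Commute.Rq_right (hA I) q).symm

variable [NormedAddCommGroup V] [NormedSpace ℝ V] {ρ : RightAction V}

theorem SliceRegularOn.clm_comp {T : V →L[ℝ] V} (hT : RightLinear ρ T) {f : ℍ[ℝ] → V}
    {U : Set ℍ[ℝ]} (hf : SliceRegularOn ρ f U) : SliceRegularOn ρ (T ∘ f) U := by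
  intro I hI x y hxy
  obtain ⟨fx, fy, hfx, hfy, hCR⟩ := hf I hI x y hxy
  refine ⟨T fx, T fy, T.hasFDerivAt.comp_hasDerivAt x hfx, T.hasFDerivAt.comp_hasDerivAt y hfy, ?_⟩
  have hT_rmul : ρ.rmul I (T fy) = T (ρ.rmul I fy) := congr($((hT I).symm) fy)
  rw [hT_rmul, ← map_add, hCR, map_zero]

theorem localResolventSet_subset_map {A T : V →L[ℝ] V} (hT : RightLinear ρ T)
    (hAT : Commute A T) (ψ : V) : localResolventSet ρ A ψ ⊆ localResolventSet ρ A (T ψ) := by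
  rintro p ⟨W, ⟨hW, g, hg, hgreg, hgsol⟩, hpW⟩
  refine ⟨W, ⟨hW, T ∘ g, T.continuous.comp_continuousOn hg, hgreg.clm_comp hT, fun s hs => ?_⟩, hpW⟩
  have hTR : Rq A s (T (g s)) = T (Rq A s (g s)) := congr($((hAT.Rq_right s).eq.symm) (g s))
  rw [Function.comp_apply, hTR, hgsol s hs]

theorem localSpectrum_map_subset {A T : V →L[ℝ] V} (hT : RightLinear ρ T)
    (hAT : Commute A T) (ψ : V) : localSpectrum ρ A (T ψ) ⊆ localSpectrum ρ A ψ :=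
  compl_subset_compl.mpr (localResolventSet_subset_map hT hAT ψ)

end

theorem stmt10_general {V : Type*} [NormedAddCommGroup V] [NormedSpace ℝ V]
    (ρ : RightAction V) (A : V →L[ℝ] V) (hA : RightLinear ρ A) (φ : V)
    (U : Set ℍ[ℝ]) (f : ℍ[ℝ] → V) (hsol : ∀ p ∈ U, Rq A p (f p) = φ) :
    ∀ q ∈ U, localSpectrum ρ A φ ⊆ localSpectrum ρ A (f q) := by
  intro q hq
  rw [← hsol q hq]
  exact localSpectrum_map_subset (hA.Rq q) ((Commute.refl A).Rq_right q) (f q)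

/-- If `f` is a continuous right slice-regular local solution of `R_p(A) f(p) = φ` on an
open set `U`, then `σ_A^S(φ) ⊆ σ_A^S(f q)` for every `q ∈ U`. -/
theorem stmt10 {V : Type*} [NormedAddCommGroup V] [NormedSpace ℝ V] [CompleteSpace V]
    (ρ : RightAction V) (A : V →L[ℝ] V) (hA : RightLinear ρ A) (φ : V)
    (U : Set ℍ[ℝ]) (hU : IsOpen U) (f : ℍ[ℝ] → V) (hf : ContinuousOn f U)
    (hreg : SliceRegularOn ρ f U) (hsol : ∀ p ∈ U, Rq A p (f p) = φ) :
    ∀ q ∈ U, localSpectrum ρ A φ ⊆ localSpectrum ρ A (f q) :=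
  stmt10_general ρ A hA φ U f hsol

end
end

section
/- Let A ∈ B(V), B ∈ B(U) be bounded right-linear operators on right quaternionic Banach spaces and R ∈ B(V, U) an intertwiner with BR = RA. Then σ_B^S(Rφ) ⊆ σ_A^S(φ) for all φ ∈ V, and consequently R maps the local S-spectral subspace V_A(F) into U_B(F) for every subset F of ℍ. -/
open Filter Topology Set
open scoped Quaternion

noncomputable section

/-! An `ℍ`-linear intertwiner `R` with `BR = RA` also intertwines `R_p(A)` and `R_p(B)`, commutes
with the right action and preserves real derivatives, so it carries every local S-resolvent function
`f` of `A` at `φ` on an open set `W` to the local S-resolvent function `R ∘ f` of `B` at `Rφ` on `W`. -/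

theorem Rq_comp_eq_comp_Rq {V U : Type*} [SeminormedAddCommGroup V] [NormedSpace ℝ V]
    [SeminormedAddCommGroup U] [NormedSpace ℝ U]
    {A : V →L[ℝ] V} {B : U →L[ℝ] U} {R : V →L[ℝ] U} (hBR : B.comp R = R.comp A) (q : ℍ[ℝ]) :
    (Rq B q).comp R = R.comp (Rq A q) := by
  ext v
  have hBR' (w : V) : B (R w) = R (A w) := congrArg (· w) hBR
  simp only [Rq, ContinuousLinearMap.comp_apply, sub_apply, add_apply, smul_apply,
    ContinuousLinearMap.id_apply, hBR', map_sub, map_add, map_smul]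

theorem SliceRegularOn.clm_comp_s14 {V U : Type*} [NormedAddCommGroup V] [NormedSpace ℝ V]
    [NormedAddCommGroup U] [NormedSpace ℝ U] {ρV : RightAction V} {ρU : RightAction U}
    {R : V →L[ℝ] U} (hR : ∀ q : ℍ[ℝ], R.comp (ρV.rmul q) = (ρU.rmul q).comp R)
    {f : ℍ[ℝ] → V} {W : Set ℍ[ℝ]} (hf : SliceRegularOn ρV f W) :
    SliceRegularOn ρU (fun p => R (f p)) W := by
  intro I hI x y hxy
  obtain ⟨fx, fy, hfx, hfy, hsum⟩ := hf I hI x y hxy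
  refine ⟨R fx, R fy, R.hasFDerivAt.comp_hasDerivAt x hfx, R.hasFDerivAt.comp_hasDerivAt y hfy, ?_⟩
  rw [← ContinuousLinearMap.comp_apply (ρU.rmul I), ← hR, ContinuousLinearMap.comp_apply,
    ← map_add, hsum, map_zero]

theorem localResolventSet_subset_of_intertwining {V U : Type*}
    [NormedAddCommGroup V] [NormedSpace ℝ V] [NormedAddCommGroup U] [NormedSpace ℝ U]
    {ρV : RightAction V} {ρU : RightAction U} {A : V →L[ℝ] V} {B : U →L[ℝ] U} {R : V →L[ℝ] U}
    (hR : ∀ q : ℍ[ℝ], R.comp (ρV.rmul q) = (ρU.rmul q).comp R) (hBR : B.comp R = R.comp A)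
    (φ : V) : localResolventSet ρV A φ ⊆ localResolventSet ρU B (R φ) := by
  rintro q ⟨W, ⟨hW, f, hfc, hfreg, hfφ⟩, hqW⟩
  refine ⟨W, ⟨hW, fun p => R (f p), R.continuous.comp_continuousOn hfc, hfreg.clm_comp_s14 hR,
    fun p hp => ?_⟩, hqW⟩
  rw [← ContinuousLinearMap.comp_apply, Rq_comp_eq_comp_Rq hBR, ContinuousLinearMap.comp_apply,
    hfφ p hp]

theorem stmt14_general {V U : Type*} [NormedAddCommGroup V] [NormedSpace ℝ V]
    [NormedAddCommGroup U] [NormedSpace ℝ U]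
    (ρV : RightAction V) (ρU : RightAction U)
    (A : V →L[ℝ] V) (B : U →L[ℝ] U) (R : V →L[ℝ] U)
    (hR : ∀ q : ℍ[ℝ], R.comp (ρV.rmul q) = (ρU.rmul q).comp R)
    (hBR : B.comp R = R.comp A) :
    (∀ φ : V, localSpectrum ρU B (R φ) ⊆ localSpectrum ρV A φ) ∧
    ∀ F : Set ℍ[ℝ],
      R '' {φ : V | localSpectrum ρV A φ ⊆ F} ⊆ {ψ : U | localSpectrum ρU B ψ ⊆ F} := by
  have hspec (φ : V) : localSpectrum ρU B (R φ) ⊆ localSpectrum ρV A φ :=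
    compl_subset_compl.mpr (localResolventSet_subset_of_intertwining hR hBR φ)
  refine ⟨hspec, ?_⟩
  rintro F _ ⟨φ, hφF, rfl⟩
  exact (hspec φ).trans hφF

/-- If `R` intertwines `A` and `B` (`BR = RA`), then `σ_B^S(Rφ) ⊆ σ_A^S(φ)` and `R`
maps the local S-spectral subspace `V_A(F)` into `U_B(F)` for every `F ⊆ ℍ`. -/
theorem stmt14 {V U : Type*} [NormedAddCommGroup V] [NormedSpace ℝ V] [CompleteSpace V]
    [NormedAddCommGroup U] [NormedSpace ℝ U] [CompleteSpace U]
    (ρV : RightAction V) (ρU : RightAction U)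
    (A : V →L[ℝ] V) (B : U →L[ℝ] U) (R : V →L[ℝ] U)
    (hA : RightLinear ρV A) (hB : RightLinear ρU B)
    (hR : ∀ q : ℍ[ℝ], R.comp (ρV.rmul q) = (ρU.rmul q).comp R)
    (hBR : B.comp R = R.comp A) :
    (∀ φ : V, localSpectrum ρU B (R φ) ⊆ localSpectrum ρV A φ) ∧
    ∀ F : Set ℍ[ℝ],
      R '' {φ : V | localSpectrum ρV A φ ⊆ F} ⊆ {ψ : U | localSpectrum ρU B ψ ⊆ F} :=
  stmt14_general ρV ρU A B R hR hBR

end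
end

section
/- For the unilateral right shift B on ℓ²(ℕ, ℍ), defined by B(x₁, x₂, …) = (0, x₁, x₂, …): the S-spectrum of B is the closed quaternionic unit ball {q ∈ ℍ : |q| ≤ 1}, while the approximate S-point spectrum of B is contained in the unit sphere {q ∈ ℍ : |q| = 1}. In particular σ_S(B) ≠ σ_{aS}(B), so B is not decomposable. -/
open Filter Topology Set
open scoped Quaternion

noncomputable section

/-- Decomposability of a bounded right-linear operator: every open cover `ℍ = U ∪ W` splits
the space into `A`-invariant closed right-linear subspaces `Y, Z` with
`σ_S(A|Y) ⊆ U`, `σ_S(A|Z) ⊆ W` and `V = Y + Z`. -/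
def Decomposable {V : Type*} [NormedAddCommGroup V] [NormedSpace ℝ V]
    (ρ : RightAction V) (A : V →L[ℝ] V) : Prop :=
  ∀ U W : Set ℍ[ℝ], IsOpen U → IsOpen W → U ∪ W = Set.univ →
    ∃ (Y Z : Submodule ℝ V) (hYA : ∀ v ∈ Y, A v ∈ Y) (hZA : ∀ v ∈ Z, A v ∈ Z),
      IsClosed (Y : Set V) ∧ IsClosed (Z : Set V) ∧
      (∀ (q : ℍ[ℝ]) (v : V), v ∈ Y → ρ.rmul q v ∈ Y) ∧
      (∀ (q : ℍ[ℝ]) (v : V), v ∈ Z → ρ.rmul q v ∈ Z) ∧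
      SSpectrum (restrictOp A Y hYA) ⊆ U ∧ SSpectrum (restrictOp A Z hZA) ⊆ W ∧
      Y ⊔ Z = ⊤

/-!
Since `B` commutes with right multiplication, `R_q(B) = (B - q)(B - q̄)`, where `B - q` means
`x ↦ Bx - xq`. As `B` is an isometry, `B - q` is invertible for `‖q‖ > 1` and bounded below by
`1 - ‖q‖` for `‖q‖ < 1`; this confines `σ_S(B)` to the closed ball and `σ_{aS}(B)` to the sphere.
For `‖q‖ ≤ 1` the first basis vector is not in the range of `B - q`, so the whole ball lies in
`σ_S(B)`. Decomposability fails for the cover `{‖q‖ < 1} ∪ {‖q‖ > 1/2}`: the part `Z` with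
`0 ∉ σ_S(B|Z)` would satisfy `B Z = Z`, forcing `Z = 0`, and then `σ_S(B)` would miss `1`.
-/

open scoped lp

theorem lp.hasSum_norm_sq {ι : Type*} {E : ι → Type*} [∀ i, NormedAddCommGroup (E i)]
    (x : lp E 2) : HasSum (fun i => ‖x i‖ ^ 2) (‖x‖ ^ 2) := by
  simpa using lp.hasSum_norm (p := 2) (by norm_num) x

section General

variable {V : Type*} [SeminormedAddCommGroup V] [NormedSpace ℝ V]

theorem approxSSpectrum_subset_sSpectrum (A : V →L[ℝ] V) :
    ApproxSSpectrum A ⊆ SSpectrum A := by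
  rintro q ⟨φ, hφ, hlim⟩ ⟨u, hu⟩
  have hbound : ∀ n, 1 ≤ ‖(↑u⁻¹ : V →L[ℝ] V)‖ * ‖Rq A q (φ n)‖ := fun n => by
    calc 1 = ‖((↑u⁻¹ * ↑u : V →L[ℝ] V)) (φ n)‖ := by rw [u.inv_mul]; exact (hφ n).symm
      _ = ‖(↑u⁻¹ : V →L[ℝ] V) (Rq A q (φ n))‖ := by rw [hu]; rfl
      _ ≤ _ := ContinuousLinearMap.le_opNorm _ _
  have := ge_of_tendsto' (by simpa using hlim.const_mul ‖(↑u⁻¹ : V →L[ℝ] V)‖) hbound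
  linarith

theorem Rq_zero (A : V →L[ℝ] V) : Rq A 0 = A.comp A := by
  simp [Rq]

theorem coe_Rq_restrictOp (A : V →L[ℝ] V) (Y : Submodule ℝ V) (hY : ∀ v ∈ Y, A v ∈ Y)
    (q : ℍ[ℝ]) (v : Y) : (Rq (restrictOp A Y hY) q v : V) = Rq A q v :=
  rfl

theorem surjective_of_isUnit {f : V →L[ℝ] V} (h : IsUnit f) : Function.Surjective f := by
  obtain ⟨u, rfl⟩ := h
  exact (ContinuousLinearEquiv.ofUnit u).surjective

theorem exists_Rq_eq_of_isUnit_restrictOp {A : V →L[ℝ] V} {Y : Submodule ℝ V}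
    {hY : ∀ v ∈ Y, A v ∈ Y} {q : ℍ[ℝ]} (hu : IsUnit (Rq (restrictOp A Y hY) q)) {y : V}
    (hy : y ∈ Y) : ∃ x, Rq A q x = y := by
  obtain ⟨x, hx⟩ := surjective_of_isUnit hu ⟨y, hy⟩
  exact ⟨x, by rw [← coe_Rq_restrictOp A Y hY, hx]⟩

end General

namespace RightAction

variable {V : Type*} [SeminormedAddCommGroup V] [NormedSpace ℝ V] (ρ : RightAction V)

theorem rmul_comp_rmul_star (q : ℍ[ℝ]) :
    (ρ.rmul q).comp (ρ.rmul (star q)) = (‖q‖ ^ 2 : ℝ) • ContinuousLinearMap.id ℝ V := by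
  rw [← ρ.rmul_mul, Quaternion.star_mul_self, Quaternion.normSq_eq_norm_mul_self, ← sq,
    ρ.rmul_real]

theorem rmul_add_rmul_star (q : ℍ[ℝ]) :
    ρ.rmul q + ρ.rmul (star q) = (2 * q.re) • ContinuousLinearMap.id ℝ V := by
  rw [← ρ.rmul_add, Quaternion.self_add_star', ρ.rmul_real]

theorem isUnit_rmul {q : ℍ[ℝ]} (hq : q ≠ 0) : IsUnit (ρ.rmul q) :=
  isUnit_iff_exists.mpr ⟨ρ.rmul q⁻¹,
    by rw [ContinuousLinearMap.mul_def, ← ρ.rmul_mul, inv_mul_cancel₀ hq, ρ.rmul_one]; rfl,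
    by rw [ContinuousLinearMap.mul_def, ← ρ.rmul_mul, mul_inv_cancel₀ hq, ρ.rmul_one]; rfl⟩

theorem Rq_eq_comp {A : V →L[ℝ] V} (hA : RightLinear ρ A) (q : ℍ[ℝ]) :
    Rq A q = (A - ρ.rmul q).comp (A - ρ.rmul (star q)) := by
  have hsum : (2 * q.re) • A = (ρ.rmul q).comp A + (ρ.rmul (star q)).comp A := by
    rw [← ContinuousLinearMap.add_comp, rmul_add_rmul_star, ContinuousLinearMap.smul_comp,
      ContinuousLinearMap.id_comp]
  rw [Rq, ContinuousLinearMap.sub_comp, ContinuousLinearMap.comp_sub,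
    ContinuousLinearMap.comp_sub, hA, rmul_comp_rmul_star, hsum]
  abel

end RightAction

section Isometric

variable {V : Type*} [NormedAddCommGroup V] [NormedSpace ℝ V] {ρ : RightAction V}
  {A : V →L[ℝ] V} (hρ : ∀ q x, ‖ρ.rmul q x‖ = ‖q‖ * ‖x‖) (hA : ∀ x, ‖A x‖ = ‖x‖)

include hρ hA

theorem one_sub_norm_mul_le_norm_sub_rmul (q : ℍ[ℝ]) (x : V) :
    (1 - ‖q‖) * ‖x‖ ≤ ‖(A - ρ.rmul q) x‖ := by
  have := norm_sub_norm_le (A x) (ρ.rmul q x)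
  rw [hA, hρ] at this
  rw [sub_apply]
  linarith

theorem isUnit_sub_rmul_of_one_lt_norm [CompleteSpace V] {q : ℍ[ℝ]} (hq : 1 < ‖q‖) :
    IsUnit (A - ρ.rmul q) := by
  have hq0 : q ≠ 0 := norm_pos_iff.mp (one_pos.trans hq)
  have hsmall : ‖A * ρ.rmul q⁻¹‖ < 1 :=
    calc ‖A * ρ.rmul q⁻¹‖ ≤ ‖A‖ * ‖ρ.rmul q⁻¹‖ := ContinuousLinearMap.opNorm_comp_le _ _
      _ ≤ 1 * ‖q⁻¹‖ := by
        gcongr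
        · exact A.opNorm_le_bound zero_le_one fun x => by rw [hA, one_mul]
        · exact ContinuousLinearMap.opNorm_le_bound _ (norm_nonneg _) fun x => (hρ _ x).le
      _ < 1 := by rw [one_mul, norm_inv]; exact inv_lt_one_of_one_lt₀ hq
  have hfactor : A - ρ.rmul q = -((1 - A * ρ.rmul q⁻¹) * ρ.rmul q) := by
    rw [sub_mul, one_mul, mul_assoc, ContinuousLinearMap.mul_def (ρ.rmul _), ← ρ.rmul_mul,
      mul_inv_cancel₀ hq0, ρ.rmul_one, neg_sub]
    rfl
  rw [hfactor]
  exact ((isUnit_one_sub_of_norm_lt_one hsmall).mul (ρ.isUnit_rmul hq0)).neg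

theorem isUnit_Rq_of_one_lt_norm [CompleteSpace V] (hAρ : RightLinear ρ A) {q : ℍ[ℝ]}
    (hq : 1 < ‖q‖) :
    IsUnit (Rq A q) := by
  rw [ρ.Rq_eq_comp hAρ]
  exact (isUnit_sub_rmul_of_one_lt_norm hρ hA hq).mul
    (isUnit_sub_rmul_of_one_lt_norm hρ hA (by rwa [Quaternion.norm_star]))

theorem one_sub_norm_sq_mul_le_norm_Rq (hAρ : RightLinear ρ A) {q : ℍ[ℝ]} (hq : ‖q‖ ≤ 1)
    (x : V) :
    (1 - ‖q‖) ^ 2 * ‖x‖ ≤ ‖Rq A q x‖ := by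
  rw [ρ.Rq_eq_comp hAρ, ContinuousLinearMap.comp_apply]
  have h₁ := one_sub_norm_mul_le_norm_sub_rmul hρ hA (star q) x
  have h₂ := one_sub_norm_mul_le_norm_sub_rmul hρ hA q ((A - ρ.rmul (star q)) x)
  rw [Quaternion.norm_star] at h₁
  calc (1 - ‖q‖) ^ 2 * ‖x‖ = (1 - ‖q‖) * ((1 - ‖q‖) * ‖x‖) := by ring
    _ ≤ (1 - ‖q‖) * ‖(A - ρ.rmul (star q)) x‖ := by gcongr
    _ ≤ _ := h₂

theorem approxSSpectrum_subset_sphere [CompleteSpace V] (hAρ : RightLinear ρ A) :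
    ApproxSSpectrum A ⊆ {q : ℍ[ℝ] | ‖q‖ = 1} := by
  intro q hq
  rcases lt_trichotomy ‖q‖ 1 with hlt | heq | hgt
  · obtain ⟨φ, hφ, hlim⟩ := hq
    have := ge_of_tendsto' hlim fun n => by
      simpa [hφ n] using one_sub_norm_sq_mul_le_norm_Rq hρ hA hAρ hlt.le (φ n)
    nlinarith
  · exact heq
  · exact absurd (isUnit_Rq_of_one_lt_norm hρ hA hAρ hgt) (approxSSpectrum_subset_sSpectrum A hq)

end Isometric

section Shift

variable {B : ℓ²(ℕ, ℍ[ℝ]) →L[ℝ] ℓ²(ℕ, ℍ[ℝ])} {ρ : RightAction ℓ²(ℕ, ℍ[ℝ])}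
  (hB0 : ∀ x : ℓ²(ℕ, ℍ[ℝ]), B x 0 = 0) (hB : ∀ (x : ℓ²(ℕ, ℍ[ℝ])) (n : ℕ), B x (n + 1) = x n)
  (hρ : ∀ (q : ℍ[ℝ]) (x : ℓ²(ℕ, ℍ[ℝ])) (n : ℕ), ρ.rmul q x n = x n * q)

include hB0 hB in
theorem norm_shift_apply (x : ℓ²(ℕ, ℍ[ℝ])) : ‖B x‖ = ‖x‖ := by
  have hsum := (hasSum_nat_add_iff' 1).mpr (lp.hasSum_norm_sq (B x))
  simp only [Finset.range_one, Finset.sum_singleton, hB0, hB, norm_zero] at hsum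
  have := (lp.hasSum_norm_sq x).unique (by simpa using hsum)
  exact (pow_left_inj₀ (norm_nonneg _) (norm_nonneg _) two_ne_zero).mp this.symm

include hρ in
theorem norm_rmul_apply (q : ℍ[ℝ]) (x : ℓ²(ℕ, ℍ[ℝ])) : ‖ρ.rmul q x‖ = ‖q‖ * ‖x‖ := by
  have hsum := (lp.hasSum_norm_sq x).mul_left (‖q‖ ^ 2)
  have := (lp.hasSum_norm_sq (ρ.rmul q x)).unique (by simpa [hρ, mul_pow, mul_comm] using hsum)
  rw [← mul_pow] at this
  exact (pow_left_inj₀ (norm_nonneg _) (by positivity) two_ne_zero).mp this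

include hB0 hB hρ in
theorem rightLinear_shift : RightLinear ρ B := by
  intro q
  ext x (_ | n) <;> simp [hB0, hB, hρ]

include hB0 hB hρ in
theorem shift_sub_rmul_apply_ne_single {q : ℍ[ℝ]} (hq : ‖q‖ ≤ 1) (y : ℓ²(ℕ, ℍ[ℝ])) :
    (B - ρ.rmul q) y ≠ lp.single 2 0 1 := by
  -- The only candidate solution is `y n = -(q ^ (n + 1))⁻¹`, which is not square-summable.
  intro h
  have hcoord n : B y n - y n * q = (lp.single 2 0 1 : ℓ²(ℕ, ℍ[ℝ])) n := by
    rw [← h]; simp [hρ]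
  have hstep n : y (n + 1) * q = y n := by
    have := hcoord (n + 1)
    rw [hB, lp.single_apply_ne 2 0 _ n.succ_ne_zero] at this
    exact (sub_eq_zero.mp this).symm
  have hpow n : y n * q ^ (n + 1) = -1 := by
    induction n with
    | zero => simpa [hB0, neg_eq_iff_eq_neg, eq_comm] using hcoord 0
    | succ n ih => rw [pow_succ', ← mul_assoc, hstep, ih]
  have hge n : 1 ≤ ‖y n‖ ^ 2 := by
    have hnorm : ‖y n‖ * ‖q‖ ^ (n + 1) = 1 := by simpa [norm_pow] using congr_arg norm (hpow n)
    have : ‖q‖ ^ (n + 1) ≤ 1 := pow_le_one₀ (norm_nonneg q) hq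
    nlinarith [norm_nonneg (y n)]
  have := ge_of_tendsto' (lp.hasSum_norm_sq y).summable.tendsto_atTop_zero hge
  linarith

include hB0 hB hρ in
theorem not_surjective_Rq_shift {q : ℍ[ℝ]} (hq : ‖q‖ ≤ 1) : ¬ Function.Surjective (Rq B q) := by
  intro hsurj
  obtain ⟨x, hx⟩ := hsurj (lp.single 2 0 1)
  rw [ρ.Rq_eq_comp (rightLinear_shift hB0 hB hρ), ContinuousLinearMap.comp_apply] at hx
  exact shift_sub_rmul_apply_ne_single hB0 hB hρ hq _ hx

include hB0 hB hρ in
theorem sSpectrum_shift : SSpectrum B = {q : ℍ[ℝ] | ‖q‖ ≤ 1} := by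
  ext q
  refine ⟨fun hq => show ‖q‖ ≤ 1 from not_lt.mp fun h => hq ?_, fun hq hu => ?_⟩
  · exact isUnit_Rq_of_one_lt_norm (norm_rmul_apply hρ) (norm_shift_apply hB0 hB)
      (rightLinear_shift hB0 hB hρ) h
  · exact not_surjective_Rq_shift hB0 hB hρ hq (surjective_of_isUnit hu)

include hB0 hB in
theorem eq_bot_of_surjOn_shift {Z : Submodule ℝ ℓ²(ℕ, ℍ[ℝ])} (hZ : Set.SurjOn B Z Z) :
    Z = ⊥ := by
  have hvanish n : ∀ z ∈ Z, z n = 0 := by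
    induction n with
    | zero =>
      intro z hz
      obtain ⟨w, -, rfl⟩ := hZ hz
      exact hB0 w
    | succ n ih =>
      intro z hz
      obtain ⟨w, hw, rfl⟩ := hZ hz
      rw [hB]
      exact ih w hw
  exact (Submodule.eq_bot_iff Z).mpr fun z hz => lp.ext (funext fun n => hvanish n z hz)

include hB0 hB hρ in
theorem not_decomposable_shift : ¬ Decomposable ρ B := by
  intro hdec
  have hcover : Metric.ball (0 : ℍ[ℝ]) 1 ∪ {q | 1 / 2 < ‖q‖} = univ :=
    eq_univ_of_forall fun q => by
      rcases le_or_gt ‖q‖ (1 / 2) with h | h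
      · left; rw [mem_ball_zero_iff]; linarith
      · right; exact h
  obtain ⟨Y, Z, hYA, hZA, -, -, -, -, hY, hZ, hsup⟩ :=
    hdec _ _ Metric.isOpen_ball (isOpen_lt continuous_const continuous_norm) hcover
  have hZunit : IsUnit (Rq (restrictOp B Z hZA) 0) :=
    not_not.mp fun h => by have := hZ h; norm_num at this
  have hZbot : Z = ⊥ := by
    refine eq_bot_of_surjOn_shift hB0 hB fun z hz => ?_
    rw [Rq_zero] at hZunit
    obtain ⟨w, hw⟩ := surjective_of_isUnit hZunit ⟨z, hz⟩
    exact ⟨_, (restrictOp B Z hZA w).2, congr_arg Subtype.val hw⟩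
  rw [hZbot, sup_bot_eq] at hsup
  subst hsup
  have hYunit : IsUnit (Rq (restrictOp B ⊤ hYA) 1) :=
    not_not.mp fun h => by simpa using hY h
  exact not_surjective_Rq_shift hB0 hB hρ norm_one.le fun y =>
    exists_Rq_eq_of_isUnit_restrictOp hYunit Submodule.mem_top

end Shift

/-- For the unilateral right shift `B` on `ℓ²(ℕ, ℍ)`: the S-spectrum of `B` is the closed
quaternionic unit ball, while the approximate S-point spectrum is contained in the unit
sphere; in particular they differ, so `B` is not decomposable. -/
theorem stmt18
    (B : lp (fun _ : ℕ => ℍ[ℝ]) 2 →L[ℝ] lp (fun _ : ℕ => ℍ[ℝ]) 2)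
    (hB0 : ∀ x : lp (fun _ : ℕ => ℍ[ℝ]) 2, B x 0 = 0)
    (hB : ∀ (x : lp (fun _ : ℕ => ℍ[ℝ]) 2) (n : ℕ), B x (n + 1) = x n)
    (ρ : RightAction (lp (fun _ : ℕ => ℍ[ℝ]) 2))
    (hρ : ∀ (q : ℍ[ℝ]) (x : lp (fun _ : ℕ => ℍ[ℝ]) 2) (n : ℕ), ρ.rmul q x n = x n * q) :
    SSpectrum B = {q : ℍ[ℝ] | ‖q‖ ≤ 1} ∧
    ApproxSSpectrum B ⊆ {q : ℍ[ℝ] | ‖q‖ = 1} ∧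
    SSpectrum B ≠ ApproxSSpectrum B ∧
    ¬ Decomposable ρ B := by
  have hspec := sSpectrum_shift hB0 hB hρ
  have happrox : ApproxSSpectrum B ⊆ {q : ℍ[ℝ] | ‖q‖ = 1} :=
    approxSSpectrum_subset_sphere (norm_rmul_apply hρ) (norm_shift_apply hB0 hB)
      (rightLinear_shift hB0 hB hρ)
  have hzero : (0 : ℍ[ℝ]) ∈ SSpectrum B \ ApproxSSpectrum B :=
    ⟨by simp [hspec], fun h => by simpa using happrox h⟩
  exact ⟨hspec, happrox, fun h => hzero.2 (h ▸ hzero.1), not_decomposable_shift hB0 hB hρ⟩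

end
end
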